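/- arXiv:1412.6908 — 2 statements merged into one kernel-verified Lean document; each statement's English description precedes it below -/
import Mathlib

section
/- Let F_3 be the free group with free basis {x, y, z} and let H = ⟨x²y²x², y²z²y², z²x²y²x²z²⟩. Then H is not an echelon subgroup of F_3. -/
/-- The rank of a subgroup: the minimal cardinality of a generating set.
For subgroups of free groups (which are free by Nielsen–Schreier) this is the
cardinality of a free basis. -/
noncomputable def rk {G : Type*} [Group G] (H : Subgroup G) : Cardinal :=
  ⨅ S : {S : Set G // Subgroup.closure S = H}, Cardinal.mk S.1

/-- A subgroup `H` is inert if `rk (H ⊓ K) ≤ rk K` for every finitely generated `K`. -/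
def IsInert {G : Type*} [Group G] (H : Subgroup G) : Prop :=
  ∀ K : Subgroup G, K.FG → rk (H ⊓ K) ≤ rk K

/-- `stage x i` is the subgroup generated by the first `i` elements of `x`. -/
def stage {n : ℕ} {F : Type*} [Group F] (x : Fin n → F) (i : ℕ) : Subgroup F :=
  Subgroup.closure (x '' {j | (j : ℕ) < i})

/-- `x` is an ordered free basis of `F`. -/
def IsOrderedBasis {n : ℕ} {F : Type*} [Group F] (x : Fin n → F) : Prop :=
  Function.Bijective (FreeGroup.lift x)

/-- `H` is in echelon form with respect to the ordered basis `x`: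
`rk (H ⊓ F_i) ≤ rk (H ⊓ F_{i-1}) + 1` for `i = 1, …, n`. -/
def InEchelonForm {n : ℕ} {F : Type*} [Group F] (x : Fin n → F) (H : Subgroup F) : Prop :=
  ∀ i : ℕ, i < n → rk (H ⊓ stage x (i + 1)) ≤ rk (H ⊓ stage x i) + 1

/-- `H` is an echelon subgroup: it is in echelon form with respect to
some ordered free basis. -/
def IsEchelon {n : ℕ} (H : Subgroup (FreeGroup (Fin n))) : Prop :=
  ∃ x : Fin n → FreeGroup (Fin n), IsOrderedBasis x ∧ InEchelonForm x H

/-- A 1-generator (subgroup) endomorphism: an endomorphism fixing all but (possibly)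
one member of some set of free generators. -/
def IsOneGenEndo {G : Type*} [Group G] (φ : G →* G) : Prop :=
  ∃ (ι : Type) (b : FreeGroupBasis ι G) (s : Set ι),
    s.Subsingleton ∧ ∀ i ∉ s, φ (b i) = b i

/-- The subgroup of points fixed by an endomorphism. -/
def fixedSubgroup {G : Type*} [Group G] (φ : G →* G) : Subgroup G where
  carrier := {g | φ g = g}
  one_mem' := by simp
  mul_mem' := by intro a b ha hb; simp only [Set.mem_setOf_eq, map_mul] at *; rw [ha, hb]
  inv_mem' := by intro a ha; simp only [Set.mem_setOf_eq, map_inv] at *; rw [ha]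

/-- An element is primitive if it belongs to some free basis. -/
def IsPrimitive {n : ℕ} (g : FreeGroup (Fin n)) : Prop :=
  ∃ x : Fin n → FreeGroup (Fin n), IsOrderedBasis x ∧ ∃ j, x j = g

/-- The generators of `F_3`. -/
def xx : FreeGroup (Fin 3) := FreeGroup.of 0
def yy : FreeGroup (Fin 3) := FreeGroup.of 1
def zz : FreeGroup (Fin 3) := FreeGroup.of 2

/-- The subgroup `H = ⟨x²y²x², y²z²y², z²x²y²x²z²⟩` of `F_3`. -/
def Hex : Subgroup (FreeGroup (Fin 3)) :=
  Subgroup.closure {xx^2 * yy^2 * xx^2, yy^2 * zz^2 * yy^2, zz^2 * xx^2 * yy^2 * xx^2 * zz^2}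

/-!
Suppose `Hex` were in echelon form with respect to a basis `x₀, x₁, x₂` of `F₃`. Its three
generators are independent in the mod-3 abelianization, so `Hex` has rank at least 3; since each
step of the echelon form raises the rank by at most one, `Hex ∩ ⟨x₀⟩ ≠ 1`, and `Hex` contains a
power `aᴺ`, `N ≥ 3`, of the primitive element `a = x₀`.

But `Hex` lies in the image of the endomorphism `xᵢ ↦ xᵢ²`, whose elements have reduced words
made of doubled letters. The reduced word of `aᴺ` is `p cᴺ p⁻¹`, where `c` is the cyclic reduction
of `a`. If `c` has even length, a rotation of `c` is itself doubled, so `a` vanishes in the mod-2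
abelianization, which a primitive element does not. If `c` has odd length, the doubling forces `c`
to be a power of a single letter, so `Hex` contains a conjugate of a nontrivial power of a
generator; this is excluded by an action of `F₃` on `ℤ³` in which `Hex` fixes the origin while
each generator shifts one coordinate by one.
-/

namespace List

variable {β : Type*}

def double (l : List β) : List β := l.flatMap fun t => [t, t]

@[simp] lemma double_nil : double ([] : List β) = [] := rfl

@[simp] lemma double_cons (t : β) (l : List β) : double (t :: l) = t :: t :: double l := rfl

@[simp] lemma mem_double {l : List β} {b : β} : b ∈ double l ↔ b ∈ l := by
  simp [double]

lemma exists_double_eq_of_double_eq_append {l u v : List β} (h : double l = u ++ v)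
    (hu : Even u.length) : ∃ l₁ l₂, double l₁ = u ∧ double l₂ = v := by
  induction l generalizing u with
  | nil =>
    obtain ⟨rfl, rfl⟩ := append_eq_nil_iff.mp h.symm
    exact ⟨[], [], rfl, rfl⟩
  | cons t l ih =>
    match u, hu with
    | [], _ => exact ⟨[], t :: l, rfl, h⟩
    | [_], hu => simp at hu
    | a :: b :: u, hu =>
      obtain ⟨rfl, rfl, h'⟩ : t = a ∧ t = b ∧ double l = u ++ v := by simpa using h
      obtain ⟨l₁, l₂, rfl, rfl⟩ := ih h' (by simpa [Nat.even_add_one] using hu)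
      exact ⟨t :: l₁, l₂, rfl, rfl⟩

lemma flatten_replicate_succ_cons (N : ℕ) (c₀ : β) (c : List β) :
    (replicate (N + 1) (c₀ :: c)).flatten = c₀ :: ((replicate N (c ++ [c₀])).flatten ++ c) := by
  induction N with
  | zero => simp
  | succ N ih => rw [replicate_succ, flatten_cons, ih]; simp [replicate_succ]

/-- Along `c ^ (N + 1)`, the pairs of a doubled word are aligned either with the copies of `c` or
with the copies shifted by one letter. -/
lemma exists_double_eq_flatten_replicate_rotate_append {l p q c : List β} {N : ℕ}
    (h : double l = p ++ (replicate (N + 1) c).flatten ++ q) :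
    ∃ k l' q', double l' = (replicate N (c.rotate k)).flatten ++ q' := by
  rcases Nat.even_or_odd p.length with hp | hp
  · rw [append_assoc] at h
    obtain ⟨-, l', -, hl'⟩ := exists_double_eq_of_double_eq_append h hp
    exact ⟨0, l', c ++ q, by simp [hl', replicate_succ']⟩
  · cases c with
    | nil => exact ⟨0, [], [], by simp⟩
    | cons c₀ c =>
      rw [flatten_replicate_succ_cons,
        show ∀ r, p ++ c₀ :: r ++ q = (p ++ [c₀]) ++ (r ++ q) by simp] at h
      obtain ⟨-, l', -, hl'⟩ :=
        exists_double_eq_of_double_eq_append h (by simpa [Nat.even_add_one])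
      exact ⟨1, l', c ++ q, by simp [hl']⟩

lemma forall_mem_eq_of_double_eq_cons_append {l l' : List β} {t : β}
    (h : double l' = t :: double l ++ [t]) : ∀ b ∈ l, b = t := by
  induction l generalizing l' with
  | nil => simp
  | cons a l ih =>
    obtain _ | ⟨b, l'⟩ := l'
    · simp at h
    obtain ⟨rfl, hba, h'⟩ : b = t ∧ b = a ∧ double l' = a :: (double l ++ [t]) := by simpa using h
    subst hba
    simpa using ih h'

/-- The pairs inside the second copy of `d` are shifted by one letter against those inside the
first, so any two consecutive letters of `d` are paired somewhere. -/
lemma eq_replicate_of_double_eq_append_self {l d : List β} (h : double l = d ++ d)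
    (hd : Odd d.length) : ∃ t, d = replicate d.length t := by
  obtain rfl | ⟨d, t, rfl⟩ := eq_nil_or_concat d
  · simp at hd
  rw [concat_eq_append, show d ++ [t] ++ (d ++ [t]) = d ++ (t :: d ++ [t]) by simp] at h
  obtain ⟨l₁, l₂, rfl, h₂⟩ :=
    exists_double_eq_of_double_eq_append h (by simpa [Nat.odd_add_one] using hd)
  have := forall_mem_eq_of_double_eq_cons_append h₂
  exact ⟨t, eq_replicate_iff.mpr ⟨rfl, by simpa [or_imp] using this⟩⟩

end List

section Rank

universe u

variable {G : Type u} [Group G]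

lemma rk_bot : rk (⊥ : Subgroup G) = 0 :=
  le_antisymm ((ciInf_le' _ ⟨(∅ : Set G), Subgroup.closure_empty⟩).trans_eq (by simp)) bot_le

lemma toAdd_mem_span_of_mem_closure {K V : Type*} [Ring K] [AddCommGroup V] [Module K V]
    (f : G →* Multiplicative V) {S : Set G} {g : G} (hg : g ∈ Subgroup.closure S) :
    (f g).toAdd ∈ Submodule.span K ((fun s => (f s).toAdd) '' S) := by
  induction hg using Subgroup.closure_induction with
  | mem s hs => exact Submodule.subset_span ⟨s, hs, rfl⟩
  | one => simp
  | mul g h _ _ hg hh => simpa using add_mem hg hh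
  | inv g _ hg => simpa using neg_mem hg

lemma natCast_le_rk_of_linearIndependent {K : Type*} {V : Type u} [Field K] [AddCommGroup V]
    [Module K V] (f : G →* Multiplicative V) {H : Subgroup G} {m : ℕ} {g : Fin m → G}
    (hg : ∀ i, g i ∈ H) (hli : LinearIndependent K fun i => (f (g i)).toAdd) :
    (m : Cardinal) ≤ rk H := by
  have : Nonempty {S : Set G // Subgroup.closure S = H} := ⟨⟨H, H.closure_eq⟩⟩
  refine le_ciInf fun ⟨S, hS⟩ => ?_
  set W := Submodule.span K ((fun s => (f s).toAdd) '' S)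
  have hW : ∀ i, (f (g i)).toAdd ∈ W := fun i =>
    toAdd_mem_span_of_mem_closure f (hS ▸ hg i)
  have hliW : LinearIndependent K fun i => (⟨_, hW i⟩ : W) :=
    LinearIndependent.of_comp W.subtype hli
  calc (m : Cardinal) ≤ Module.rank K W := by simpa using hliW.cardinal_lift_le_rank
    _ ≤ Cardinal.mk ((fun s => (f s).toAdd) '' S) := rank_span_le _
    _ ≤ Cardinal.mk S := Cardinal.mk_image_le

end Rank

namespace FreeGroup

open List

variable {α : Type*}

def squareGenerators : FreeGroup α →* FreeGroup α := lift fun i => of i ^ 2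

lemma squareGenerators_mk (w : List (α × Bool)) : squareGenerators (mk w) = mk w.double := by
  induction w with
  | nil => exact _root_.map_one _
  | cons t w ih =>
    change squareGenerators (mk ([t] ++ w)) = mk ([t, t] ++ w.double)
    rw [← mul_mk, ← mul_mk, _root_.map_mul, ih]
    congr 1
    obtain ⟨i, _ | _⟩ := t <;> rfl

lemma isReduced_double {w : List (α × Bool)} (h : IsReduced w) : IsReduced w.double := by
  induction w with
  | nil => exact IsReduced.nil
  | cons t w ih =>
    cases w with
    | nil => simp
    | cons s w =>
      rw [isReduced_cons_cons] at h
      simp only [double_cons, isReduced_cons_cons, imp_self, true_and] at ih ⊢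
      exact ⟨h.1, ih h.2⟩

lemma map_mk_rotate {M : Type*} [CommMonoid M] (f : FreeGroup α →* M) (w : List (α × Bool))
    (k : ℕ) : f (mk (w.rotate k)) = f (mk w) := by
  rw [rotate_eq_drop_append_take_mod, ← mul_mk, _root_.map_mul, mul_comm, ← _root_.map_mul,
    mul_mk, take_append_drop]

variable [DecidableEq α]

lemma toWord_squareGenerators (g : FreeGroup α) :
    (squareGenerators g).toWord = g.toWord.double := by
  conv_lhs => rw [← mk_toWord (x := g)]
  rw [squareGenerators_mk, toWord_mk, (isReduced_double isReduced_toWord).reduce_eq]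

def abelianizationMod (p : ℕ) : FreeGroup α →* Multiplicative (α → ZMod p) :=
  lift fun i => Multiplicative.ofAdd (Pi.single i 1)

@[simp] lemma abelianizationMod_of (p : ℕ) (i : α) :
    abelianizationMod p (of i) = Multiplicative.ofAdd (Pi.single i 1) :=
  lift_apply_of

lemma abelianizationMod_two_squareGenerators (g : FreeGroup α) :
    abelianizationMod 2 (squareGenerators g) = 1 := by
  have : (abelianizationMod 2).comp (squareGenerators (α := α)) = 1 := by
    ext i j
    by_cases h : j = i
    · subst h; simp [abelianizationMod, squareGenerators]; rfl
    · simp [abelianizationMod, squareGenerators, h]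
  exact DFunLike.congr_fun this g

lemma mk_replicate (i : α) (b : Bool) (m : ℕ) :
    mk (replicate m (i, b)) = of i ^ (if b then (m : ℤ) else -m) := by
  have h : mk (replicate m (i, true)) = of i ^ m := by rw [← toWord_of_pow, mk_toWord]
  cases b
  · rw [if_neg Bool.false_ne_true, zpow_neg, zpow_natCast, ← h, inv_mk]
    simp [invRev]
  · rw [if_pos rfl, zpow_natCast, h]

theorem abelianizationMod_two_eq_one_or_eq_conj_of_pow_mem_range {a : FreeGroup α} {N : ℕ}
    (hN : 3 ≤ N) (h : a ^ N ∈ (squareGenerators (α := α)).range) :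
    abelianizationMod 2 a = 1 ∨
      ∃ (g : FreeGroup α) (i : α) (M : ℤ), M ≠ 0 ∧ a = g * of i ^ M * g⁻¹ := by
  set p := reduceCyclically.conjugator a.toWord
  set c := reduceCyclically a.toWord
  have ha : mk p * mk c * (mk p)⁻¹ = a := by
    rw [inv_mk, mul_mk, mul_mk, reduceCyclically.conj_conjugator_reduceCyclically, mk_toWord]
  obtain ⟨b, hb⟩ := h
  obtain ⟨n, rfl⟩ : ∃ n, N = n + 2 + 1 := ⟨N - 3, by omega⟩
  have hw : double b.toWord = p ++ (replicate (n + 2 + 1) c).flatten ++ invRev p := by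
    rw [← toWord_squareGenerators, hb, toWord_pow,
      reduceCyclically.reduce_flatten_replicate isReduced_toWord, if_neg (by omega)]
  obtain ⟨k, l, q, hl⟩ := exists_double_eq_flatten_replicate_rotate_append hw
  rcases Nat.even_or_odd c.length with hc | hc
  · left
    rw [replicate_succ, flatten_cons, append_assoc] at hl
    obtain ⟨l₁, -, hl₁, -⟩ := exists_double_eq_of_double_eq_append hl (by simpa using hc)
    rw [← ha, _root_.map_mul, _root_.map_mul, _root_.map_inv, mul_inv_cancel_comm,
      ← map_mk_rotate _ _ k, ← hl₁, ← squareGenerators_mk, abelianizationMod_two_squareGenerators]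
  · right
    rw [replicate_succ, replicate_succ, flatten_cons, flatten_cons, ← append_assoc,
      append_assoc] at hl
    obtain ⟨l₁, -, hl₁, -⟩ := exists_double_eq_of_double_eq_append hl (by simp)
    obtain ⟨⟨i, b⟩, ht⟩ := eq_replicate_of_double_eq_append_self hl₁ (by simpa using hc)
    rw [rotate_eq_iff, rotate_replicate, length_rotate] at ht
    have hc₀ : c.length ≠ 0 := by rintro h; simp [h] at hc
    refine ⟨mk p, i, if b then (c.length : ℤ) else -c.length, by split <;> omega, ?_⟩
    rw [← mk_replicate, ← ht, ha]

lemma abelianizationMod_ne_one_of_surjective {n p : ℕ} [Fact p.Prime]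
    {x : Fin n → FreeGroup (Fin n)} (hx : Function.Surjective (lift x)) (j : Fin n) :
    abelianizationMod p (x j) ≠ 1 := by
  have hspan : ⊤ ≤ Submodule.span (ZMod p)
      (Set.range fun j => (abelianizationMod p (x j)).toAdd) := by
    rw [← (Pi.basisFun (ZMod p) (Fin n)).span_eq, Submodule.span_le]
    rintro _ ⟨i, rfl⟩
    have hi : of i ∈ Subgroup.closure (Set.range x) := by
      rw [← range_lift_eq_closure, MonoidHom.range_eq_top.mpr hx]
      trivial
    simpa [← Set.range_comp, Function.comp_def] using
      toAdd_mem_span_of_mem_closure (K := ZMod p) (abelianizationMod p) hi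
  simpa using (linearIndependent_of_top_le_span_of_card_eq_finrank hspan (by simp)).ne_zero j

end FreeGroup

section Echelon

variable {n : ℕ} {F : Type*} [Group F]

lemma stage_one (x : Fin (n + 1) → F) : stage x 1 = Subgroup.zpowers (x 0) := by
  have h : {j : Fin (n + 1) | (j : ℕ) < 1} = {0} := by
    ext j
    simp only [Set.mem_ofPred_eq, Set.mem_singleton_iff, Fin.ext_iff, Fin.val_zero,
      Nat.lt_one_iff]
  rw [stage, Subgroup.zpowers_eq_closure, h, Set.image_singleton]

lemma stage_eq_top {x : Fin n → F} (hx : Function.Surjective (FreeGroup.lift x)) :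
    stage x n = ⊤ := by
  rw [stage, ← MonoidHom.range_eq_top.mpr hx, FreeGroup.range_lift_eq_closure]
  simp only [Fin.is_lt, Set.ofPred_true, Set.image_univ]

lemma InEchelonForm.rk_inf_stage_add_le {x : Fin n → F} {H : Subgroup F}
    (hH : InEchelonForm x H) {i k : ℕ} (hik : i + k ≤ n) :
    rk (H ⊓ stage x (i + k)) ≤ rk (H ⊓ stage x i) + k := by
  induction k with
  | zero => simp
  | succ k ih =>
    calc rk (H ⊓ stage x (i + k + 1)) ≤ rk (H ⊓ stage x (i + k)) + 1 := hH _ (by omega)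
      _ ≤ rk (H ⊓ stage x i) + k + 1 := by gcongr; exact ih (by omega)
      _ = rk (H ⊓ stage x i) + (k + 1 : ℕ) := by push_cast; ring

lemma InEchelonForm.exists_zpow_mem {x : Fin (n + 1) → F} {H : Subgroup F}
    (hx : Function.Surjective (FreeGroup.lift x)) (hH : InEchelonForm x H)
    (hrk : ((n + 1 : ℕ) : Cardinal) ≤ rk H) : ∃ m : ℤ, m ≠ 0 ∧ x 0 ^ m ∈ H := by
  by_contra! hcon
  have hbot : H ⊓ stage x 1 = ⊥ := by
    rw [eq_bot_iff, stage_one]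
    rintro _ ⟨hH, m, rfl⟩
    by_cases hm : m = 0
    · simp [hm]
    · exact absurd hH (hcon m hm)
  have := hH.rk_inf_stage_add_le (i := 1) (k := n) (by omega)
  rw [hbot, rk_bot, zero_add, Nat.add_comm 1 n, stage_eq_top hx, inf_top_eq] at this
  exact absurd (hrk.trans this) (by norm_cast; omega)

end Echelon

lemma Hex_le_range_squareGenerators :
    Hex ≤ (FreeGroup.squareGenerators (α := Fin 3)).range := by
  rw [Hex, Subgroup.closure_le]
  rintro _ (rfl | rfl | rfl)
  · exact ⟨xx * yy * xx, by simp [FreeGroup.squareGenerators, xx, yy]⟩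
  · exact ⟨yy * zz * yy, by simp [FreeGroup.squareGenerators, yy, zz]⟩
  · exact ⟨zz * xx * yy * xx * zz, by simp [FreeGroup.squareGenerators, xx, yy, zz]⟩

lemma three_le_rk_Hex : (3 : Cardinal) ≤ rk Hex := by
  have hli : LinearIndependent (ZMod 3) fun i => (FreeGroup.abelianizationMod 3
      (![xx ^ 2 * yy ^ 2 * xx ^ 2, yy ^ 2 * zz ^ 2 * yy ^ 2,
        zz ^ 2 * xx ^ 2 * yy ^ 2 * xx ^ 2 * zz ^ 2] i)).toAdd := by
    rw [Fintype.linearIndependent_iff]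
    decide
  exact_mod_cast natCast_le_rk_of_linearIndependent _
    (fun i => by fin_cases i <;> exact Subgroup.subset_closure (by simp)) hli

section Shear

variable {ι : Type*} (i : ι) (f : ℤ → ι → ℤ) (hf : ∀ t, f t i = 1)

def shear : Equiv.Perm (ι → ℤ) where
  toFun w := w + f (w i)
  invFun w := w - f (w i - 1)
  left_inv w := by simp [hf]
  right_inv w := by simp [hf]

lemma shear_zpow_apply_self (M : ℤ) (w : ι → ℤ) : (shear i f hf ^ M) w i = w i + M := by
  induction M using Int.induction_on generalizing w with
  | zero => simp
  | succ M ih =>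
    rw [zpow_add_one, Equiv.Perm.mul_apply, ih]
    simp [shear, hf]
    ring
  | pred M ih =>
    rw [zpow_sub_one, Equiv.Perm.mul_apply, ih]
    simp [shear, Equiv.Perm.inv_def, hf]
    ring

lemma eq_zero_of_shear_zpow_apply_eq {M : ℤ} {w : ι → ℤ} (h : (shear i f hf ^ M) w = w) :
    M = 0 := by
  have := congrFun h i
  rw [shear_zpow_apply_self] at this
  omega

end Shear

/-- Correction terms of an action of `F₃` on `ℤ³` in which the generator `i` shifts the
`i`-th coordinate by one; they are tuned so that the three generators of `Hex` fix the origin. -/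
def hexCorrection : Fin 3 → ℤ → Fin 3 → ℤ :=
  ![fun t => ![1, if t < 0 then -1 else 0, if t = 4 then -2 else 0],
    fun t => ![if t < 0 then 0 else -2, 1, if t < 0 then -1 else 0],
    fun t => ![if t < 0 then -4 else 2, if t < 0 then 1 else -2, 1]]

lemma hexCorrection_self (i : Fin 3) (t : ℤ) : hexCorrection i t i = 1 := by
  fin_cases i <;> rfl

def hexAction : FreeGroup (Fin 3) →* Equiv.Perm (Fin 3 → ℤ) :=
  FreeGroup.lift fun i => shear i (hexCorrection i) (hexCorrection_self i)

lemma Hex_le_stabilizer_zero :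
    Hex ≤ (MulAction.stabilizer (Equiv.Perm (Fin 3 → ℤ)) (0 : Fin 3 → ℤ)).comap hexAction := by
  rw [Hex, Subgroup.closure_le]
  rintro _ (rfl | rfl | rfl) <;>
  · simp only [SetLike.mem_coe, Subgroup.mem_comap, MulAction.mem_stabilizer_iff,
      Equiv.Perm.smul_def]
    decide

lemma conj_of_zpow_notMem_Hex (g : FreeGroup (Fin 3)) (i : Fin 3) {M : ℤ} (hM : M ≠ 0) :
    g * FreeGroup.of i ^ M * g⁻¹ ∉ Hex := by
  intro hmem
  have h : (hexAction (g * FreeGroup.of i ^ M * g⁻¹)) 0 = 0 := Hex_le_stabilizer_zero hmem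
  rw [_root_.map_mul, _root_.map_mul, _root_.map_inv, _root_.map_zpow, Equiv.Perm.mul_apply,
    Equiv.Perm.mul_apply, hexAction, FreeGroup.lift_apply_of, ← Equiv.Perm.eq_inv_iff_eq] at h
  exact hM (eq_zero_of_shear_zpow_apply_eq _ _ _ h)

/-- `H = ⟨x²y²x², y²z²y², z²x²y²x²z²⟩` is not an echelon subgroup of `F_3`. -/
theorem example_subgroup_not_echelon : ¬ IsEchelon Hex := by
  rintro ⟨x, hx, hH⟩
  obtain ⟨m, hm, hmem⟩ := hH.exists_zpow_mem hx.2 (by exact_mod_cast three_le_rk_Hex)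
  have hpow : x 0 ^ (3 * m.natAbs) ∈ Hex := by
    rw [pow_mul']
    refine pow_mem ?_ 3
    rcases Int.natAbs_eq m with h | h
    · rwa [← zpow_natCast, ← h]
    · rwa [← zpow_natCast, ← inv_mem_iff, ← zpow_neg, ← h]
  rcases FreeGroup.abelianizationMod_two_eq_one_or_eq_conj_of_pow_mem_range (by omega)
    (Hex_le_range_squareGenerators hpow) with h | ⟨g, i, M, hM, hg⟩
  · exact FreeGroup.abelianizationMod_ne_one_of_surjective hx.2 0 h
  · rw [hg, conj_pow, ← zpow_natCast, ← zpow_mul] at hpow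
    exact conj_of_zpow_notMem_Hex g i (by positivity) hpow
end

section
/- Let F_n be the free group of finite rank n with free basis {x_1, …, x_n} and let F_{n−1} = ⟨x_1, …, x_{n−1}⟩ be the free factor generated by the first n−1 basis elements. Then for every finitely generated subgroup G of F_n one has rk(G ∩ F_{n−1}) ≤ rk(G). -/
/-!
The cosets `FreeGroup α ⧸ G` are the vertices of the Schreier graph of `G`, with an edge
`(x, a)` from `x` to `x · a` for every vertex `x` and letter `a`. Choose a maximal subtree
through the base point whose paths into the `L`-component of the base point (the vertices reached
by elements of `⟨L⟩`) use `L`-letters only; it spans the whole graph. The Schreier generators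
`t_e` of the edges generate `G`, and those of the edges of the `L`-component generate
`G ⊓ ⟨L⟩`. Recording the non-tree edges crossed by a loop at the base point is a homomorphism
`G → FreeGroup (edges)` sending `t_e` to `e` for every non-tree edge `e`; followed by
`e ↦ t_e` on the `L`-component and `e ↦ 1` elsewhere it is a retraction of `G` onto `G ⊓ ⟨L⟩`,
and a homomorphic image of `G` has rank at most `rk G`.
-/

section Rank

open Subgroup

universe v

variable {F : Type v} [Group F]

theorem rk_le_mk_of_closure_eq {K : Subgroup F} {S : Set F} (h : closure S = K) :
    rk K ≤ Cardinal.mk S :=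
  ciInf_le (OrderBot.bddBelow _) (⟨S, h⟩ : {S : Set F // closure S = K})

theorem exists_closure_eq_mk_eq_rk (K : Subgroup F) :
    ∃ S : Set F, closure S = K ∧ Cardinal.mk S = rk K := by
  have : Nonempty {S : Set F // closure S = K} := ⟨⟨K, closure_eq K⟩⟩
  obtain ⟨S, hS⟩ := csInf_mem (Set.range_nonempty fun S : {S : Set F // closure S = K} ↦
    Cardinal.mk S.1)
  exact ⟨S.1, S.2, hS⟩

theorem rk_range_le {F' : Type v} [Group F'] {K : Subgroup F} (f : K →* F') :
    rk f.range ≤ rk K := by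
  obtain ⟨S, rfl, hS⟩ := exists_closure_eq_mk_eq_rk K
  calc rk f.range ≤ Cardinal.mk (f '' ((closure S).subtype ⁻¹' S)) := by
        refine rk_le_mk_of_closure_eq ?_
        rw [← MonoidHom.map_closure, closure_preimage_eq_top, MonoidHom.range_eq_map]
    _ ≤ Cardinal.mk ((closure S).subtype ⁻¹' S) := Cardinal.mk_image_le
    _ ≤ Cardinal.mk S := Cardinal.mk_preimage_of_injective _ _ (closure S).subtype_injective
    _ = rk (closure S) := hS

end Rank

namespace SchreierGraph

open FreeGroup Subgroup

universe u

variable {α : Type u}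

abbrev Word (α : Type u) := List (α × Bool)

theorem mk_singleton_true (a : α) : mk [(a, true)] = of a := rfl

theorem mk_singleton_false (a : α) : mk [(a, false)] = (of a)⁻¹ := by
  rw [← mk_singleton_true, inv_mk]
  rfl

theorem mk_singleton_mul_flip (a : α) (b : Bool) : mk [(a, b)] * mk [(a, !b)] = 1 := by
  rw [mul_mk, one_eq_mk]
  exact Quot.sound Red.Step.cons_not

def WordIn (L : Set α) (w : Word α) : Prop := ∀ l ∈ w, l.1 ∈ L

theorem mk_mem_closure_of_wordIn {L : Set α} {w : Word α} (hw : WordIn L w) :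
    mk w ∈ closure (of '' L) := by
  induction w with
  | nil => exact one_mem _
  | cons l w ih =>
    have hl : of l.1 ∈ closure (of '' L) := subset_closure ⟨l.1, hw l List.mem_cons_self, rfl⟩
    have hmk : mk [l] ∈ closure (of '' L) := by
      obtain ⟨a, _ | _⟩ := l
      · rw [mk_singleton_false]; exact inv_mem hl
      · exact hl
    rw [← List.singleton_append, ← mul_mk]
    exact mul_mem hmk (ih fun l' hl' ↦ hw l' (List.mem_cons_of_mem _ hl'))

theorem exists_wordIn_of_mem_closure {L : Set α} {g : FreeGroup α} (hg : g ∈ closure (of '' L)) :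
    ∃ w : Word α, WordIn L w ∧ mk w = g := by
  induction hg using closure_induction with
  | mem _ h =>
    obtain ⟨a, ha, rfl⟩ := h
    exact ⟨[(a, true)], by simpa [WordIn] using ha, rfl⟩
  | one => exact ⟨[], by simp [WordIn], rfl⟩
  | mul _ _ _ _ ihg ihh =>
    obtain ⟨u, hu, rfl⟩ := ihg
    obtain ⟨v, hv, rfl⟩ := ihh
    exact ⟨u ++ v, fun l hl ↦ (List.mem_append.1 hl).elim (hu l) (hv l), mul_mk⟩
  | inv _ _ ih =>
    obtain ⟨w, hw, rfl⟩ := ih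
    refine ⟨invRev w, fun l hl ↦ ?_, inv_mk.symm⟩
    obtain ⟨l', hl', rfl⟩ := List.mem_map.1 (List.mem_reverse.1 hl)
    exact hw l' hl'

variable (G : Subgroup (FreeGroup α))

abbrev Vertex := FreeGroup α ⧸ G

abbrev Edge := Vertex G × α

variable {G}

/-- The endpoint of the path labelled `g` starting at `x`: a right action, written through the
left action on left cosets. -/
def act (x : Vertex G) (g : FreeGroup α) : Vertex G := g⁻¹ • x

theorem act_mul (x : Vertex G) (g h : FreeGroup α) : act (act x g) h = act x (g * h) := by
  simp [act, mul_inv_rev, mul_smul]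

@[simp]
theorem act_one (x : Vertex G) : act x 1 = x := by simp [act]

theorem act_mul_inv_cancel (x : Vertex G) (g : FreeGroup α) : act (act x g) g⁻¹ = x := by
  rw [act_mul, mul_inv_cancel, act_one]

theorem act_inv_mul_cancel (x : Vertex G) (g : FreeGroup α) : act (act x g⁻¹) g = x := by
  rw [act_mul, inv_mul_cancel, act_one]

variable (G)

def base : Vertex G := ((1 : FreeGroup α) : FreeGroup α ⧸ G)

theorem act_base_eq_base_iff {g : FreeGroup α} : act (base G) g = base G ↔ g ∈ G := by
  simp [act, base, QuotientGroup.eq]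

def endpoint (w : Word α) : Vertex G := act (base G) (mk w)

theorem endpoint_append (u v : Word α) :
    endpoint G (u ++ v) = act (endpoint G u) (mk v) := by
  rw [endpoint, endpoint, act_mul, mul_mk]

variable {G}

theorem exists_endpoint_eq (x : Vertex G) : ∃ w, endpoint G w = x := by
  obtain ⟨g, rfl⟩ := QuotientGroup.mk_surjective x
  obtain ⟨w, hw⟩ := Quot.exists_rep (g⁻¹ : FreeGroup α)
  refine ⟨w, ?_⟩
  change act (base G) (mk w) = _
  rw [← quot_mk_eq_mk, hw]
  simp [act, base]

/-- The edge crossed by the letter `l` read at `x`, forwards if `l.2` and backwards otherwise. -/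
def edgeOf (x : Vertex G) : α × Bool → Edge G
  | (a, true) => (x, a)
  | (a, false) => (act x (of a)⁻¹, a)

theorem edgeOf_flip (x : Vertex G) (a : α) (b : Bool) :
    edgeOf (act x (mk [(a, b)])) (a, !b) = edgeOf x (a, b) := by
  cases b
  · simp only [edgeOf, mk_singleton_false, Bool.not_false]
  · simp only [edgeOf, mk_singleton_true, Bool.not_true, act_mul_inv_cancel]

section Crossing

variable (T : Set (Edge G))

open Classical in
/-- The edges in `T` are collapsed; the others are the generators of `FreeGroup (Edge G)`. -/
noncomputable def crossLetter (x : Vertex G) (l : α × Bool) : FreeGroup (Edge G) :=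
  if edgeOf x l ∈ T then 1 else mk [(edgeOf x l, l.2)]

noncomputable def crossWord : Vertex G → Word α → FreeGroup (Edge G)
  | _, [] => 1
  | x, l :: w => crossLetter T x l * crossWord (act x (mk [l])) w

theorem crossWord_append (u v : Word α) (x : Vertex G) :
    crossWord T x (u ++ v) = crossWord T x u * crossWord T (act x (mk u)) v := by
  induction u generalizing x with
  | nil => simp [crossWord, ← one_eq_mk]
  | cons l u ih =>
    rw [List.cons_append, crossWord, crossWord, ih, mul_assoc, act_mul, mul_mk,
      List.singleton_append]

theorem crossWord_flip (x : Vertex G) (a : α) (b : Bool) (w : Word α) :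
    crossWord T x ((a, b) :: (a, !b) :: w) = crossWord T x w := by
  have hcancel : crossLetter T x (a, b) * crossLetter T (act x (mk [(a, b)])) (a, !b) = 1 := by
    unfold crossLetter
    rw [edgeOf_flip]
    split_ifs
    · exact one_mul 1
    · exact mk_singleton_mul_flip _ _
  rw [crossWord, crossWord, ← mul_assoc, hcancel, one_mul, act_mul, mk_singleton_mul_flip, act_one]

theorem crossWord_eq_of_step {u v : Word α} (h : Red.Step u v) (x : Vertex G) :
    crossWord T x u = crossWord T x v := by
  obtain ⟨⟩ := h
  rw [crossWord_append, crossWord_append, crossWord_flip]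

/-- The product of the non-`T` edges crossed by the path labelled `g` starting at `x`. -/
noncomputable def crossing (x : Vertex G) : FreeGroup α → FreeGroup (Edge G) :=
  Quot.lift (crossWord T x) fun _ _ h ↦ crossWord_eq_of_step T h x

theorem crossing_mk (x : Vertex G) (w : Word α) : crossing T x (mk w) = crossWord T x w := rfl

theorem crossing_mul (x : Vertex G) (g h : FreeGroup α) :
    crossing T x (g * h) = crossing T x g * crossing T (act x g) h := by
  obtain ⟨u⟩ := g
  obtain ⟨v⟩ := h
  exact crossWord_append T u v x

theorem crossing_inv (x : Vertex G) (g : FreeGroup α) :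
    crossing T x g⁻¹ = (crossing T (act x g⁻¹) g)⁻¹ := by
  refine eq_inv_of_mul_eq_one_left ?_
  rw [← crossing_mul, inv_mul_cancel]
  rfl

theorem crossing_of_notMem {x : Vertex G} {a : α} (h : (x, a) ∉ T) :
    crossing T x (of a) = of (x, a) := by
  simp [← mk_singleton_true, crossing_mk, crossWord, crossLetter, edgeOf, h]

variable (G) in
noncomputable def crossingHom : G →* FreeGroup (Edge G) where
  toFun g := crossing T (base G) g
  map_one' := rfl
  map_mul' g h := by
    rw [coe_mul, crossing_mul, (act_base_eq_base_iff G).2 g.2]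

end Crossing

variable (G)

def component (L : Set α) : Set (Vertex G) :=
  {x | ∃ g ∈ closure (of '' L), act (base G) g = x}

def componentEdges (L : Set α) : Set (Edge G) :=
  {e | e.1 ∈ component G L ∧ e.2 ∈ L}

variable {G}

theorem act_mem_component {L : Set α} {x : Vertex G} (hx : x ∈ component G L) {g : FreeGroup α}
    (hg : g ∈ closure (of '' L)) : act x g ∈ component G L := by
  obtain ⟨h, hh, rfl⟩ := hx
  exact ⟨h * g, mul_mem hh hg, (act_mul _ _ _).symm⟩

theorem endpoint_mem_component {L : Set α} {w : Word α} (hw : WordIn L w) :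
    endpoint G w ∈ component G L :=
  ⟨mk w, mk_mem_closure_of_wordIn hw, rfl⟩

section SchreierGenerators

variable (path : Vertex G → Word α)

def schreierElt (x : Vertex G) (g : FreeGroup α) : FreeGroup α :=
  mk (path x) * g * (mk (path (act x g)))⁻¹

def edgeGen (e : Edge G) : FreeGroup α := schreierElt path e.1 (of e.2)

theorem schreierElt_mul (x : Vertex G) (g h : FreeGroup α) :
    schreierElt path x (g * h) = schreierElt path x g * schreierElt path (act x g) h := by
  simp only [schreierElt, act_mul]
  group

theorem schreierElt_inv (x : Vertex G) (g : FreeGroup α) :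
    schreierElt path x g⁻¹ = (schreierElt path (act x g⁻¹) g)⁻¹ := by
  simp only [schreierElt, act_inv_mul_cancel]
  group

variable {path}

theorem schreierElt_mem (hpath : ∀ x, endpoint G (path x) = x) (x : Vertex G) (g : FreeGroup α) :
    schreierElt path x g ∈ G := by
  generalize hy : act x g = y
  rw [← act_base_eq_base_iff, schreierElt, hy, ← act_mul, ← act_mul, ← endpoint, hpath, hy]
  calc act y (mk (path y))⁻¹ = act (endpoint G (path y)) (mk (path y))⁻¹ := by rw [hpath]
    _ = base G := act_mul_inv_cancel _ _

theorem schreierElt_mem_closure_edgeGen {L : Set α} {g : FreeGroup α} (hg : g ∈ closure (of '' L))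
    {x : Vertex G} (hx : x ∈ component G L) :
    schreierElt path x g ∈ closure (edgeGen path '' componentEdges G L) := by
  induction hg using closure_induction generalizing x with
  | mem _ h =>
    obtain ⟨a, ha, rfl⟩ := h
    exact subset_closure ⟨(x, a), ⟨hx, ha⟩, rfl⟩
  | one =>
    rw [schreierElt, act_one, mul_one, mul_inv_cancel]
    exact one_mem _
  | mul g h hg _ ihg ihh =>
    rw [schreierElt_mul]
    exact mul_mem (ihg hx) (ihh (act_mem_component hx hg))
  | inv g hg ih =>
    rw [schreierElt_inv]
    exact inv_mem (ih (act_mem_component hx (inv_mem hg)))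

end SchreierGenerators

variable (G) in
def treeEdges (M : Set (Word α)) : Set (Edge G) :=
  {e | ∃ q l, q ++ [l] ∈ M ∧ edgeOf (endpoint G q) l = e}

theorem crossing_mk_eq_one_of_mem {M : Set (Word α)} (hpre : ∀ p l, p ++ [l] ∈ M → p ∈ M)
    {p : Word α} (hp : p ∈ M) : crossing (treeEdges G M) (base G) (mk p) = 1 := by
  induction p using List.reverseRecOn with
  | nil => rfl
  | append_singleton q l ih =>
    rw [← mul_mk, crossing_mul, ih (hpre q l hp), one_mul, crossing_mk, crossWord, crossWord,
      crossLetter, if_pos ⟨q, l, hp, rfl⟩, mul_one]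

variable (G) in
/-- `M` lists the paths from the base point in a subtree of the Schreier graph, and those of its
paths that end in the `L`-component use only `L`-letters. -/
structure IsAdaptedTree (L : Set α) (M : Set (Word α)) : Prop where
  nil_mem : [] ∈ M
  mem_of_append_mem : ∀ p l, p ++ [l] ∈ M → p ∈ M
  injOn_endpoint : Set.InjOn (endpoint G) M
  wordIn_of_mem_component : ∀ p ∈ M, endpoint G p ∈ component G L → WordIn L p

section Tree

variable {L : Set α} {M : Set (Word α)} {path : Vertex G → Word α}
  (hM : IsAdaptedTree G L M) (hpath_mem : ∀ x, path x ∈ M) (hpath : ∀ x, endpoint G (path x) = x)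
include hM hpath_mem hpath

theorem path_endpoint {p : Word α} (hp : p ∈ M) : path (endpoint G p) = p :=
  hM.injOn_endpoint (hpath_mem _) hp (hpath _)

theorem schreierElt_eq_one_of_append_mem {q : Word α} {l : α × Bool} (h : q ++ [l] ∈ M) :
    schreierElt path (endpoint G q) (mk [l]) = 1 := by
  rw [schreierElt, ← endpoint_append, path_endpoint hM hpath_mem hpath h,
    path_endpoint hM hpath_mem hpath (hM.mem_of_append_mem q l h), mul_mk, mul_inv_cancel]

theorem edgeGen_eq_one_of_mem_treeEdges {e : Edge G} (he : e ∈ treeEdges G M) :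
    edgeGen path e = 1 := by
  obtain ⟨q, ⟨a, _ | _⟩, h, rfl⟩ := he
  · have hstep := schreierElt_eq_one_of_append_mem hM hpath_mem hpath h
    rwa [mk_singleton_false, schreierElt_inv, inv_eq_one] at hstep
  · exact schreierElt_eq_one_of_append_mem hM hpath_mem hpath h

theorem crossing_edgeGen {e : Edge G} (he : e ∉ treeEdges G M) :
    crossing (treeEdges G M) (base G) (edgeGen path e) = of e := by
  obtain ⟨x, a⟩ := e
  have hback : crossing (treeEdges G M) (act x (of a)) (mk (path (act x (of a))))⁻¹ = 1 := by
    nth_rewrite 1 [← hpath (act x (of a))]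
    rw [crossing_inv, endpoint, act_mul_inv_cancel,
      crossing_mk_eq_one_of_mem hM.mem_of_append_mem (hpath_mem _), inv_one]
  rw [edgeGen, schreierElt, crossing_mul, crossing_mul, ← act_mul, ← endpoint, hpath,
    crossing_mk_eq_one_of_mem hM.mem_of_append_mem (hpath_mem x), one_mul, crossing_of_notMem _ he,
    hback, mul_one]

theorem edgeGen_mem_inf {e : Edge G} (he : e ∈ componentEdges G L) :
    edgeGen path e ∈ G ⊓ closure (of '' L) := by
  obtain ⟨x, a⟩ := e
  obtain ⟨hx, ha⟩ := he
  have hofa : of a ∈ closure (of '' L) := subset_closure ⟨a, ha, rfl⟩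
  have hpath_closure : ∀ y ∈ component G L, mk (path y) ∈ closure (of '' L) := fun y hy ↦
    mk_mem_closure_of_wordIn (hM.wordIn_of_mem_component _ (hpath_mem y) (by rwa [hpath]))
  exact mem_inf.2 ⟨schreierElt_mem hpath _ _, mul_mem (mul_mem (hpath_closure x hx) hofa)
    (inv_mem (hpath_closure _ (act_mem_component hx hofa)))⟩

theorem inf_le_closure_edgeGen :
    G ⊓ closure (of '' L) ≤ closure (edgeGen path '' componentEdges G L) := by
  intro g hg
  have hbase : path (base G) = [] := by
    simpa [endpoint, ← one_eq_mk] using path_endpoint hM hpath_mem hpath hM.nil_mem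
  have hbase_mem : base G ∈ component G L := ⟨1, one_mem _, act_one _⟩
  have h := schreierElt_mem_closure_edgeGen (path := path) (mem_inf.1 hg).2 hbase_mem
  rwa [schreierElt, (act_base_eq_base_iff G).2 (mem_inf.1 hg).1, hbase, ← one_eq_mk, one_mul,
    inv_one, mul_one] at h

end Tree

variable (G) in
noncomputable def retraction (T : Set (Edge G)) (path : Vertex G → Word α) (L : Set α) :
    G →* FreeGroup α :=
  (lift ((componentEdges G L).mulIndicator (edgeGen path))).comp (crossingHom G T)

theorem range_retraction {L : Set α} {M : Set (Word α)} {path : Vertex G → Word α}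
    (hM : IsAdaptedTree G L M) (hpath_mem : ∀ x, path x ∈ M)
    (hpath : ∀ x, endpoint G (path x) = x) :
    (retraction G (treeEdges G M) path L).range = G ⊓ closure (of '' L) := by
  apply le_antisymm
  · rw [retraction, MonoidHom.range_comp]
    refine (map_le_range _ _).trans (range_lift_le ?_)
    rintro _ ⟨e, rfl⟩
    by_cases he : e ∈ componentEdges G L
    · rw [Set.mulIndicator_of_mem he]
      exact edgeGen_mem_inf hM hpath_mem hpath he
    · rw [Set.mulIndicator_of_notMem he]
      exact one_mem _
  · refine (inf_le_closure_edgeGen hM hpath_mem hpath).trans ((closure_le _).2 ?_)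
    rintro _ ⟨e, he, rfl⟩
    by_cases hT : e ∈ treeEdges G M
    · rw [edgeGen_eq_one_of_mem_treeEdges hM hpath_mem hpath hT]
      exact one_mem _
    · refine ⟨⟨edgeGen path e, schreierElt_mem hpath _ _⟩, ?_⟩
      change lift _ (crossing _ (base G) (edgeGen path e)) = _
      rw [crossing_edgeGen hM hpath_mem hpath hT, lift_apply_of, Set.mulIndicator_of_mem he]

theorem IsAdaptedTree.sUnion {L : Set α} {c : Set (Set (Word α))}
    (hc : ∀ m ∈ c, IsAdaptedTree G L m) (hchain : IsChain (· ⊆ ·) c) (hne : c.Nonempty) :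
    IsAdaptedTree G L (⋃₀ c) where
  nil_mem := hne.elim fun m hm ↦ ⟨m, hm, (hc m hm).nil_mem⟩
  mem_of_append_mem := fun p l ⟨m, hm, h⟩ ↦ ⟨m, hm, (hc m hm).mem_of_append_mem p l h⟩
  injOn_endpoint := by
    rintro p ⟨m₁, hm₁, hp⟩ q ⟨m₂, hm₂, hq⟩ h
    rcases hchain.total hm₁ hm₂ with h₁₂ | h₂₁
    · exact (hc m₂ hm₂).injOn_endpoint (h₁₂ hp) hq h
    · exact (hc m₁ hm₁).injOn_endpoint hp (h₂₁ hq) h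
  wordIn_of_mem_component := fun p ⟨m, hm, hp⟩ ↦ (hc m hm).wordIn_of_mem_component p hp

variable (G) in
theorem exists_maximal_isAdaptedTree (L : Set α) : ∃ M, Maximal (IsAdaptedTree G L) M := by
  have hsingleton : IsAdaptedTree G L {[]} :=
    { nil_mem := rfl
      mem_of_append_mem := fun p l h ↦ by simp at h
      injOn_endpoint := Set.injOn_singleton _ _
      wordIn_of_mem_component := fun p hp _ ↦ by simp [Set.mem_singleton_iff.1 hp, WordIn] }
  obtain ⟨M, -, hM⟩ := zorn_subset_nonempty {M | IsAdaptedTree G L M}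
    (fun c hc hchain hne ↦ ⟨⋃₀ c, IsAdaptedTree.sUnion hc hchain hne,
      fun _ ↦ Set.subset_sUnion_of_mem⟩) _ hsingleton
  exact ⟨M, hM⟩

section Spanning

variable {L : Set α} {M : Set (Word α)} (hM : Maximal (IsAdaptedTree G L) M)
include hM

theorem exists_mem_endpoint_eq_append {p : Word α} (hp : p ∈ M) (l : α × Bool)
    (hL : endpoint G (p ++ [l]) ∈ component G L → WordIn L p ∧ l.1 ∈ L) :
    ∃ q ∈ M, endpoint G q = endpoint G (p ++ [l]) := by
  by_contra! hnew
  have hnotMem : p ++ [l] ∉ M := fun h ↦ hnew _ h rfl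
  have hinsert : IsAdaptedTree G L (insert (p ++ [l]) M) :=
    { nil_mem := Or.inr hM.1.nil_mem
      mem_of_append_mem := by
        rintro r l' (h | h)
        · exact Or.inr ((List.append_inj' h rfl).1 ▸ hp)
        · exact Or.inr (hM.1.mem_of_append_mem r l' h)
      injOn_endpoint := (Set.injOn_insert hnotMem).2
        ⟨hM.1.injOn_endpoint, fun ⟨q, hq, h⟩ ↦ hnew q hq h⟩
      wordIn_of_mem_component := by
        rintro r (rfl | hr) hV
        · simpa [WordIn, or_imp, forall_and] using hL hV
        · exact hM.1.wordIn_of_mem_component r hr hV }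
  exact hnotMem (hM.2 hinsert (Set.subset_insert _ _) (Set.mem_insert _ _))

theorem exists_mem_endpoint_eq_of_wordIn {w : Word α} (hw : WordIn L w) :
    ∃ p ∈ M, endpoint G p = endpoint G w := by
  induction w using List.reverseRecOn with
  | nil => exact ⟨[], hM.1.nil_mem, rfl⟩
  | append_singleton u l ih =>
    have hu : WordIn L u := fun l' h ↦ hw l' (List.mem_append_left _ h)
    obtain ⟨p, hp, hpu⟩ := ih hu
    obtain ⟨q, hq, hqp⟩ := exists_mem_endpoint_eq_append hM hp l fun _ ↦
      ⟨hM.1.wordIn_of_mem_component p hp (hpu ▸ endpoint_mem_component hu), hw l (by simp)⟩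
    exact ⟨q, hq, by rw [hqp, endpoint_append, hpu, ← endpoint_append]⟩

theorem exists_mem_endpoint_eq_endpoint (w : Word α) : ∃ p ∈ M, endpoint G p = endpoint G w := by
  induction w using List.reverseRecOn with
  | nil => exact ⟨[], hM.1.nil_mem, rfl⟩
  | append_singleton u l ih =>
    obtain ⟨p, hp, hpu⟩ := ih
    have hpl : endpoint G (p ++ [l]) = endpoint G (u ++ [l]) := by
      rw [endpoint_append, hpu, ← endpoint_append]
    -- the tree may only be extended along `l` into the `L`-component from an `L`-path
    by_cases hV : endpoint G (u ++ [l]) ∈ component G L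
    · obtain ⟨g, hg, hgx⟩ := hV
      obtain ⟨w, hw, rfl⟩ := exists_wordIn_of_mem_closure hg
      obtain ⟨q, hq, hqw⟩ := exists_mem_endpoint_eq_of_wordIn hM hw
      exact ⟨q, hq, hqw.trans hgx⟩
    · rw [← hpl] at hV ⊢
      exact exists_mem_endpoint_eq_append hM hp l fun h ↦ absurd h hV

theorem exists_mem_endpoint_eq (x : Vertex G) : ∃ p ∈ M, endpoint G p = x := by
  obtain ⟨w, rfl⟩ := exists_endpoint_eq x
  exact exists_mem_endpoint_eq_endpoint hM w

end Spanning

theorem rk_inf_closure_of_le (G : Subgroup (FreeGroup α)) (L : Set α) :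
    rk (G ⊓ closure (of '' L)) ≤ rk G := by
  obtain ⟨M, hM⟩ := exists_maximal_isAdaptedTree G L
  choose path hpath_mem hpath using exists_mem_endpoint_eq hM
  rw [← range_retraction hM.1 hpath_mem hpath]
  exact rk_range_le _

end SchreierGraph

theorem freeFactor_inter_rank_le_general (n : ℕ) (G : Subgroup (FreeGroup (Fin n))) :
    rk (G ⊓ Subgroup.closure (FreeGroup.of '' {i : Fin n | (i : ℕ) < n - 1})) ≤ rk G :=
  SchreierGraph.rk_inf_closure_of_le G _

/-- For the free factor `F_{n-1} = ⟨x_1, …, x_{n-1}⟩` of `F_n` and any finitely generated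
subgroup `G ≤ F_n`, one has `rk (G ⊓ F_{n-1}) ≤ rk G`. -/
theorem freeFactor_inter_rank_le (n : ℕ) (G : Subgroup (FreeGroup (Fin n))) (hG : G.FG) :
    rk (G ⊓ Subgroup.closure (FreeGroup.of '' {i : Fin n | (i : ℕ) < n - 1})) ≤ rk G :=
  freeFactor_inter_rank_le_general n G
end
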